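/- Let G ≤ Homeo(S¹), let I₁, I₂, I₃ ⊆ S¹ be three pairwise disjoint proper arcs, and let g₁, g₂, g₃ ∈ G be such that g_i is supported inside I_i for i = 1, 2, 3. Then for every g ∈ G at least one of the following holds: (1) [g₁^g, g₁] = 1 or [g₁^g, g₂] = 1 or [g₁^g, g₃] = 1; (2) there exists i ∈ {1,2,3} such that [g₂^g, g_i] = 1 and [g₃^g, g_i] = 1. In particular, for every g ∈ G there exist i, j ∈ {1,2,3} with [g_i^g, g_j] = 1. -/

import Mathlib

/-!
Proof idea: let `J = g(I₁)`, which carries the support of `g₁^g`. If both alternatives fail,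
then `J` meets each `Iᵢ` (as `g₁^g` commutes with no `gᵢ`), and no `Iᵢ` lies inside `J`
(as each `Iᵢ` meets `g(I₂)` or `g(I₃)`, which are disjoint from `J`). So each of the three
disjoint arcs `Iᵢ` straddles an end of the arc `J`, but `J` has only two ends.
-/

open Set

/-- The circle `S¹ = ℝ/ℤ`. -/
abbrev S1 := UnitAddCircle

/-- A permutation of the circle which is a homeomorphism. -/
def IsCircleHomeo (g : Equiv.Perm S1) : Prop := Continuous g ∧ Continuous g.symm

/-- A permutation is supported inside a set `I` if it fixes the complement of `I`
pointwise. -/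
def SupportedIn (g : Equiv.Perm S1) (I : Set S1) : Prop :=
  ∀ x : S1, x ∉ I → g x = x

section LinearOrder

variable {α : Type*} [LinearOrder α] {K U T T' : Set α}

theorem Set.OrdConnected.lt_of_notMem_of_lt (hK : K.OrdConnected) {q c x : α} (hq : q ∉ K)
    (hc : c ∈ K) (hx : x ∈ K) (hqc : q < c) : q < x := by
  by_contra! hxq
  exact hq (hK.out hx hc ⟨hxq, hqc.le⟩)

theorem Set.OrdConnected.lt_of_notMem_of_gt (hK : K.OrdConnected) {q c x : α} (hq : q ∉ K)
    (hc : c ∈ K) (hx : x ∈ K) (hcq : c < q) : x < q := by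
  by_contra! hqx
  exact hq (hK.out hc hx ⟨hcq.le, hqx⟩)

/-- Two disjoint intervals of `U` that both stick out of the interval `K` must do so on
opposite sides, and then `K` lies between two points of `U`. -/
theorem Set.OrdConnected.subset_of_disjoint_straddling (hK : K.OrdConnected)
    (hU : U.OrdConnected) (hT : T.OrdConnected) (hT' : T'.OrdConnected) (hd : Disjoint T T')
    (hTU : T ⊆ U) (hT'U : T' ⊆ U) (hTK : (T ∩ K).Nonempty) (hTK' : ¬T ⊆ K)
    (hT'K : (T' ∩ K).Nonempty) (hT'K' : ¬T' ⊆ K) : K ⊆ U := by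
  intro x hx
  obtain ⟨c, hcT, hcK⟩ := hTK
  obtain ⟨c', hcT', hcK'⟩ := hT'K
  obtain ⟨q, hqT, hqK⟩ := not_subset.1 hTK'
  obtain ⟨q', hqT', hqK'⟩ := not_subset.1 hT'K'
  have hne : q ≠ c := fun h => hqK (h ▸ hcK)
  have hne' : q' ≠ c' := fun h => hqK' (h ▸ hcK')
  rcases hne.lt_or_gt with h | h <;> rcases hne'.lt_or_gt with h' | h'
  · have hqc' : q < c' := hK.lt_of_notMem_of_lt hqK hcK hcK' h
    have hq'c : q' < c := hK.lt_of_notMem_of_lt hqK' hcK' hcK h'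
    exact (disjoint_left.1 hd (hT.out hqT hcT ⟨le_max_left _ _, max_le h.le hq'c.le⟩)
      (hT'.out hqT' hcT' ⟨le_max_right _ _, max_le hqc'.le h'.le⟩)).elim
  · exact hU.out (hTU hqT) (hT'U hqT')
      ⟨(hK.lt_of_notMem_of_lt hqK hcK hx h).le, (hK.lt_of_notMem_of_gt hqK' hcK' hx h').le⟩
  · exact hU.out (hT'U hqT') (hTU hqT)
      ⟨(hK.lt_of_notMem_of_lt hqK' hcK' hx h').le, (hK.lt_of_notMem_of_gt hqK hcK hx h).le⟩
  · have hc'q : c' < q := hK.lt_of_notMem_of_gt hqK hcK hcK' h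
    have hcq' : c < q' := hK.lt_of_notMem_of_gt hqK' hcK' hcK h'
    exact (disjoint_left.1 hd (hT.out hcT hqT ⟨le_min h.le hcq'.le, min_le_left _ _⟩)
      (hT'.out hcT' hqT' ⟨le_min hc'q.le h'.le, min_le_right _ _⟩)).elim

end LinearOrder

/-- The coordinate on the circle cut open at `a`, with values in `[a, a + 1)`. -/
noncomputable def icoCoord (a : ℝ) (x : S1) : ℝ := AddCircle.equivIco 1 a x

theorem icoCoord_injective (a : ℝ) : Function.Injective (icoCoord a) := fun _ _ h =>
  (AddCircle.equivIco 1 a).injective (Subtype.ext h)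

theorem icoCoord_mem (a : ℝ) (x : S1) : icoCoord a x ∈ Ico a (a + 1) :=
  (AddCircle.equivIco 1 a x).2

theorem coe_icoCoord (a : ℝ) (x : S1) : ((icoCoord a x : ℝ) : S1) = x :=
  AddCircle.coe_equivIco

theorem icoCoord_coe_of_mem {a t : ℝ} (ht : t ∈ Ico a (a + 1)) : icoCoord a t = t :=
  AddCircle.equivIco_coe_of_mem ht

theorem icoCoord_eq_of_mem {a b : ℝ} {x : S1} (h : icoCoord a x ∈ Ico b (b + 1)) :
    icoCoord b x = icoCoord a x := by
  conv_lhs => rw [← coe_icoCoord a x]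
  exact icoCoord_coe_of_mem h

theorem ordConnected_icoCoord_image {a : ℝ} {S : Set S1} (hS : IsPreconnected S)
    (ha : (a : S1) ∉ S) : (icoCoord a '' S).OrdConnected := by
  refine (hS.image _ fun z hz => ?_).ordConnected
  have hza : z ≠ a := fun h => ha (h ▸ hz)
  exact (continuous_subtype_val.continuousAt.comp
    (AddCircle.continuousAt_equivIco 1 a hza)).continuousWithinAt

/-- Recutting at a point `z₁ ∉ S` makes `S` an interval reaching up to `a + 1`, so no point of
`S` lies between `z₁` and another point of `Sᶜ`. -/
theorem ordConnected_icoCoord_image_compl {a : ℝ} {S : Set S1} (hS : IsPreconnected S)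
    (ha : (a : S1) ∈ S) : (icoCoord a '' Sᶜ).OrdConnected := by
  refine ⟨?_⟩
  rintro _ ⟨z₁, hz₁, rfl⟩ _ ⟨z₂, hz₂, rfl⟩ t ⟨h₁, h₂⟩
  set b := icoCoord a z₁
  have hab : a < b := (icoCoord_mem a z₁).1.lt_of_ne fun h =>
    hz₁ (by rw [← coe_icoCoord a z₁, ← h]; exact ha)
  have hz₂_lt : icoCoord a z₂ < a + 1 := (icoCoord_mem a z₂).2
  have ht : t ∈ Ico a (a + 1) := ⟨hab.le.trans h₁, h₂.trans_lt hz₂_lt⟩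
  refine ⟨t, fun htS => hz₂ ?_, icoCoord_coe_of_mem ht⟩
  have hbS : (b : S1) ∉ S := by rwa [coe_icoCoord]
  have hb_t : icoCoord b t = t := icoCoord_coe_of_mem ⟨h₁, by linarith [ht.2]⟩
  have hb_a : icoCoord b a = a + 1 := by
    rw [← AddCircle.coe_add_period 1 a]
    exact icoCoord_coe_of_mem ⟨(icoCoord_mem a z₁).2.le, by linarith⟩
  have hb_z₂ : icoCoord b z₂ = icoCoord a z₂ := icoCoord_eq_of_mem ⟨h₁.trans h₂, by linarith⟩
  have hz₂_mem : icoCoord b z₂ ∈ Icc (icoCoord b t) (icoCoord b a) := by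
    rw [hb_t, hb_a, hb_z₂]
    exact ⟨h₂, hz₂_lt.le⟩
  exact (icoCoord_injective b).mem_set_image.1 <| (ordConnected_icoCoord_image hS hbS).out
    (mem_image_of_mem _ htS) (mem_image_of_mem _ ha) hz₂_mem

theorem IsPreconnected.subset_of_disjoint_straddling {J I₁ I₂ I₃ : Set S1}
    (hJ : IsPreconnected J) (hI₁ : IsPreconnected I₁) (hI₂ : IsPreconnected I₂)
    (hI₃ : IsPreconnected I₃) (hd₁₂ : Disjoint I₁ I₂) (hd₁₃ : Disjoint I₁ I₃)
    (hd₂₃ : Disjoint I₂ I₃) (h₁ : ¬Disjoint J I₁) (h₂ : ¬Disjoint J I₂) (h₂' : ¬I₂ ⊆ J)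
    (h₃ : ¬Disjoint J I₃) (h₃' : ¬I₃ ⊆ J) : I₁ ⊆ J := by
  -- Cut at a point of `J ∩ I₁`: then `Jᶜ`, `I₁ᶜ`, `I₂` and `I₃` all become intervals.
  obtain ⟨x, hxJ, hxI₁⟩ := not_disjoint_iff.1 h₁
  obtain ⟨a, -, rfl⟩ := AddCircle.eq_coe_Ico x
  have hinj := icoCoord_injective a
  have meets : ∀ {I}, ¬I ⊆ J → (icoCoord a '' I ∩ icoCoord a '' Jᶜ).Nonempty := fun h => by
    rwa [← image_inter hinj, image_nonempty, ← sdiff_eq, sdiff_nonempty]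
  have leaves : ∀ {I}, ¬Disjoint J I → ¬icoCoord a '' I ⊆ icoCoord a '' Jᶜ := fun h => by
    rwa [image_subset_image_iff hinj, subset_compl_iff_disjoint_left]
  have key := (ordConnected_icoCoord_image_compl hJ hxJ).subset_of_disjoint_straddling
    (ordConnected_icoCoord_image_compl hI₁ hxI₁)
    (ordConnected_icoCoord_image hI₂ (disjoint_left.1 hd₁₂ hxI₁))
    (ordConnected_icoCoord_image hI₃ (disjoint_left.1 hd₁₃ hxI₁))
    ((disjoint_image_iff hinj).2 hd₂₃)
    (image_mono (subset_compl_iff_disjoint_left.2 hd₁₂))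
    (image_mono (subset_compl_iff_disjoint_left.2 hd₁₃))
    (meets h₂') (leaves h₂) (meets h₃') (leaves h₃)
  rwa [image_subset_image_iff hinj, compl_subset_compl] at key

theorem SupportedIn.commute {u v : Equiv.Perm S1} {A B : Set S1} (hu : SupportedIn u A)
    (hv : SupportedIn v B) (hAB : Disjoint A B) : Commute u v :=
  Equiv.Perm.Disjoint.commute fun x => by
    by_cases hx : x ∈ A
    · exact Or.inr (hv x (disjoint_left.1 hAB hx))
    · exact Or.inl (hu x hx)

theorem SupportedIn.conj {u : Equiv.Perm S1} {I : Set S1} (h : SupportedIn u I)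
    (g : Equiv.Perm S1) : SupportedIn (g * u * g⁻¹) (g '' I) := by
  intro x hx
  have hgx : g⁻¹ x ∉ I := fun hm => hx ⟨g⁻¹ x, hm, g.apply_symm_apply x⟩
  change g (u (g⁻¹ x)) = x
  rw [h _ hgx]
  exact g.apply_symm_apply x

theorem conj_commute_alternative {g g₁ g₂ g₃ : Equiv.Perm S1} (hg : Continuous g)
    {I₁ I₂ I₃ : Set S1} (hI₁ : IsPreconnected I₁) (hI₂ : IsPreconnected I₂)
    (hI₃ : IsPreconnected I₃) (hd₁₂ : Disjoint I₁ I₂) (hd₁₃ : Disjoint I₁ I₃)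
    (hd₂₃ : Disjoint I₂ I₃) (hs₁ : SupportedIn g₁ I₁) (hs₂ : SupportedIn g₂ I₂)
    (hs₃ : SupportedIn g₃ I₃) :
    (Commute (g * g₁ * g⁻¹) g₁ ∨ Commute (g * g₁ * g⁻¹) g₂ ∨ Commute (g * g₁ * g⁻¹) g₃) ∨
      ((Commute (g * g₂ * g⁻¹) g₁ ∧ Commute (g * g₃ * g⁻¹) g₁) ∨
       (Commute (g * g₂ * g⁻¹) g₂ ∧ Commute (g * g₃ * g⁻¹) g₂) ∨
       (Commute (g * g₂ * g⁻¹) g₃ ∧ Commute (g * g₃ * g⁻¹) g₃)) := by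
  by_contra h
  simp only [not_or, not_and_or] at h
  obtain ⟨⟨n₁, n₂, n₃⟩, m₁, m₂, m₃⟩ := h
  have meets : ∀ {I v}, SupportedIn v I → ¬Commute (g * g₁ * g⁻¹) v → ¬Disjoint (g '' I₁) I :=
    fun hv h hd => h ((hs₁.conj g).commute hv hd)
  have leaves : ∀ {I v}, SupportedIn v I →
      (¬Commute (g * g₂ * g⁻¹) v ∨ ¬Commute (g * g₃ * g⁻¹) v) → ¬I ⊆ g '' I₁ := by
    rintro I v hv (h | h) hI
    · exact h ((hs₂.conj g).commute hv
        (((disjoint_image_iff g.injective).2 hd₁₂.symm).mono_right hI))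
    · exact h ((hs₃.conj g).commute hv
        (((disjoint_image_iff g.injective).2 hd₁₃.symm).mono_right hI))
  exact leaves hs₁ m₁ ((hI₁.image g hg.continuousOn).subset_of_disjoint_straddling hI₁ hI₂ hI₃
    hd₁₂ hd₁₃ hd₂₃ (meets hs₁ n₁) (meets hs₂ n₂) (leaves hs₂ m₂) (meets hs₃ n₃) (leaves hs₃ m₃))

theorem circle_disjoint_arcs_commutation_general
    (G : Subgroup (Equiv.Perm S1))
    (hHomeo : ∀ g ∈ G, IsCircleHomeo g)
    (I₁ I₂ I₃ : Set S1)
    (hI₁ : IsPreconnected I₁) (hI₂ : IsPreconnected I₂) (hI₃ : IsPreconnected I₃)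
    (hd₁₂ : Disjoint I₁ I₂) (hd₁₃ : Disjoint I₁ I₃) (hd₂₃ : Disjoint I₂ I₃)
    (g₁ g₂ g₃ : Equiv.Perm S1)
    (hs₁ : SupportedIn g₁ I₁) (hs₂ : SupportedIn g₂ I₂) (hs₃ : SupportedIn g₃ I₃) :
    ∀ g ∈ G,
      ((Commute (g * g₁ * g⁻¹) g₁ ∨ Commute (g * g₁ * g⁻¹) g₂ ∨ Commute (g * g₁ * g⁻¹) g₃) ∨
        ((Commute (g * g₂ * g⁻¹) g₁ ∧ Commute (g * g₃ * g⁻¹) g₁) ∨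
         (Commute (g * g₂ * g⁻¹) g₂ ∧ Commute (g * g₃ * g⁻¹) g₂) ∨
         (Commute (g * g₂ * g⁻¹) g₃ ∧ Commute (g * g₃ * g⁻¹) g₃))) ∧
      ∃ i j : Fin 3, Commute (g * (![g₁, g₂, g₃] i) * g⁻¹) (![g₁, g₂, g₃] j) := by
  intro g hg
  have key := conj_commute_alternative (hHomeo g hg).1 hI₁ hI₂ hI₃ hd₁₂ hd₁₃ hd₂₃ hs₁ hs₂ hs₃
  refine ⟨key, ?_⟩
  rcases key with (h | h | h) | (⟨h, -⟩ | ⟨h, -⟩ | ⟨h, -⟩)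
  exacts [⟨0, 0, h⟩, ⟨0, 1, h⟩, ⟨0, 2, h⟩, ⟨1, 0, h⟩, ⟨1, 1, h⟩, ⟨1, 2, h⟩]

/-- **(Le Boudec--Matte Bon, Lemma 5.6.)** Let `G ≤ Homeo(S¹)`, let `I₁, I₂, I₃` be three
pairwise disjoint proper arcs of the circle and let `g₁, g₂, g₃ ∈ G` with `gᵢ` supported
inside `Iᵢ`. Then for every `g ∈ G` at least one of the following holds:
(1) `[g₁^g, g₁] = 1` or `[g₁^g, g₂] = 1` or `[g₁^g, g₃] = 1`;
(2) there is `i` with `[g₂^g, gᵢ] = 1` and `[g₃^g, gᵢ] = 1`.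
In particular there are `i, j` with `[gᵢ^g, gⱼ] = 1`. -/
theorem circle_disjoint_arcs_commutation
    (G : Subgroup (Equiv.Perm S1))
    (hHomeo : ∀ g ∈ G, IsCircleHomeo g)
    (I₁ I₂ I₃ : Set S1)
    (hI₁ : IsPreconnected I₁) (hI₂ : IsPreconnected I₂) (hI₃ : IsPreconnected I₃)
    (hI₁p : I₁ ≠ univ) (hI₂p : I₂ ≠ univ) (hI₃p : I₃ ≠ univ)
    (hd₁₂ : Disjoint I₁ I₂) (hd₁₃ : Disjoint I₁ I₃) (hd₂₃ : Disjoint I₂ I₃)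
    (g₁ g₂ g₃ : Equiv.Perm S1)
    (hg₁ : g₁ ∈ G) (hg₂ : g₂ ∈ G) (hg₃ : g₃ ∈ G)
    (hs₁ : SupportedIn g₁ I₁) (hs₂ : SupportedIn g₂ I₂) (hs₃ : SupportedIn g₃ I₃) :
    ∀ g ∈ G,
      ((Commute (g * g₁ * g⁻¹) g₁ ∨ Commute (g * g₁ * g⁻¹) g₂ ∨ Commute (g * g₁ * g⁻¹) g₃) ∨
        ((Commute (g * g₂ * g⁻¹) g₁ ∧ Commute (g * g₃ * g⁻¹) g₁) ∨
         (Commute (g * g₂ * g⁻¹) g₂ ∧ Commute (g * g₃ * g⁻¹) g₂) ∨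
         (Commute (g * g₂ * g⁻¹) g₃ ∧ Commute (g * g₃ * g⁻¹) g₃))) ∧
      ∃ i j : Fin 3, Commute (g * (![g₁, g₂, g₃] i) * g⁻¹) (![g₁, g₂, g₃] j) :=
  circle_disjoint_arcs_commutation_general G hHomeo I₁ I₂ I₃ hI₁ hI₂ hI₃ hd₁₂ hd₁₃ hd₂₃ g₁ g₂ g₃ hs₁
    hs₂ hs₃
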